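/- arXiv:2008.01240 — 4 statements merged into one kernel-verified Lean document; each statement's English description precedes it below -/
import Mathlib

section
/- If φ is analytic near 0 with φ(0) = 0 and φ'(t) = cos(ψ(t))/cos(2a·ψ(t)), where ψ is analytic near 0 with ψ(0) = 0 and sin ψ = κ·sin φ, then the function d = cos ψ satisfies cos²(2aψ)·(d')² = (1 - d²)(d² - λ²), where λ² = 1 - κ². -/
open Complex

/- Away from the zeros of `cos (2aψ)` and `cos ψ`, differentiating `sin ψ = κ sin φ` and using
`cos (2aψ) φ' = cos ψ` gives `cos (2aψ) ψ' = κ cos φ`; squaring and eliminating `sin φ` yields the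
equation for `d = cos ψ`. Both sides of it are analytic on the connected set `U`, and near `0` these
cosines do not vanish, so the identity theorem extends it to all of `U`. -/

lemma cos_mul_deriv_eq_of_sin_eqOn {U : Set ℂ} (hU : IsOpen U) {φ ψ : ℂ → ℂ} {κ z : ℂ}
    (hz : z ∈ U) (hφ : DifferentiableAt ℂ φ z) (hψ : DifferentiableAt ℂ ψ z)
    (hsin : ∀ w ∈ U, sin (ψ w) = κ * sin (φ w)) :
    cos (ψ z) * deriv ψ z = κ * (cos (φ z) * deriv φ z) := by
  have hsin_nhds : (fun w => sin (ψ w)) =ᶠ[nhds z] fun w => κ * sin (φ w) :=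
    Filter.eventuallyEq_of_mem (hU.mem_nhds hz) hsin
  exact hψ.hasDerivAt.csin.unique
    ((hφ.hasDerivAt.csin.const_mul κ).congr_of_eventuallyEq hsin_nhds)

lemma cos_sq_mul_sq_eq_of_sin_eq {κ lam C φ ψ φ' ψ' : ℂ} (hlam : lam ^ 2 = 1 - κ ^ 2)
    (hsin : sin ψ = κ * sin φ) (hderiv : cos ψ * ψ' = κ * (cos φ * φ'))
    (hφ' : C * φ' = cos ψ) (hcos : cos ψ ≠ 0) :
    C ^ 2 * (-sin ψ * ψ') ^ 2 = (1 - cos ψ ^ 2) * (cos ψ ^ 2 - lam ^ 2) := by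
  have hψ' : C * ψ' = κ * cos φ := by
    refine mul_left_cancel₀ hcos ?_
    linear_combination C * hderiv + κ * cos φ * hφ'
  linear_combination sin ψ ^ 2 * (C * ψ' + κ * cos φ) * hψ'
    + sin ψ ^ 2 * (sin ψ + κ * sin φ) * hsin + κ ^ 2 * sin ψ ^ 2 * sin_sq_add_cos_sq φ
    + (cos ψ ^ 2 - sin ψ ^ 2 - lam ^ 2) * sin_sq_add_cos_sq ψ + sin ψ ^ 2 * hlam

theorem d_diff_eq_general (κ lam : ℝ) (hlam : lam ^ 2 = 1 - κ ^ 2)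
    (a : ℂ) (U : Set ℂ) (hU : IsOpen U) (hUc : IsPreconnected U) (h0 : (0 : ℂ) ∈ U)
    (φ ψ : ℂ → ℂ) (hφ : ∀ z ∈ U, AnalyticAt ℂ φ z) (hψ : ∀ z ∈ U, AnalyticAt ℂ ψ z)
    (hψ0 : ψ 0 = 0)
    (hφ' : ∀ z ∈ U, deriv φ z = Complex.cos (ψ z) / Complex.cos (2 * a * ψ z))
    (hsin : ∀ z ∈ U, Complex.sin (ψ z) = (κ : ℂ) * Complex.sin (φ z)) :
    ∀ z ∈ U, Complex.cos (2 * a * ψ z) ^ 2 *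
        (deriv (fun w => Complex.cos (ψ w)) z) ^ 2 =
      (1 - Complex.cos (ψ z) ^ 2) * (Complex.cos (ψ z) ^ 2 - (lam : ℂ) ^ 2) := by
  have hcos2aψ : AnalyticOnNhd ℂ (fun z => cos (2 * a * ψ z)) U := fun z hz =>
    analyticAt_cos.comp (analyticAt_const.mul (hψ z hz))
  have hcosψ : AnalyticOnNhd ℂ (fun z => cos (ψ z)) U := fun z hz =>
    analyticAt_cos.comp (hψ z hz)
  have hne_nhds : ∀ᶠ z in nhds 0, z ∈ U ∧ cos (2 * a * ψ z) ≠ 0 ∧ cos (ψ z) ≠ 0 :=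
    Filter.Eventually.and (hU.mem_nhds h0) <|
      ((hcos2aψ 0 h0).continuousAt.eventually_ne (by simp [hψ0])).and
        ((hcosψ 0 h0).continuousAt.eventually_ne (by simp [hψ0]))
  refine fun _ hz => AnalyticOnNhd.eqOn_of_preconnected_of_eventuallyEq
    (fun w hw => ((hcos2aψ w hw).pow 2).mul ((hcosψ.deriv w hw).pow 2))
    (fun w hw => ((analyticAt_const.sub ((hcosψ w hw).pow 2)).mul
      (((hcosψ w hw).pow 2).sub analyticAt_const))) hUc h0 ?_ hz
  filter_upwards [hne_nhds] with z ⟨hz, hcos2aψz, hcosψz⟩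
  have hlamℂ : (lam : ℂ) ^ 2 = 1 - (κ : ℂ) ^ 2 := mod_cast hlam
  dsimp only [Pi.mul_apply, Pi.pow_apply, Pi.sub_apply]
  rw [(hψ z hz).differentiableAt.hasDerivAt.ccos.deriv]
  exact cos_sq_mul_sq_eq_of_sin_eq hlamℂ (hsin z hz)
    (cos_mul_deriv_eq_of_sin_eqOn hU hz (hφ z hz).differentiableAt (hψ z hz).differentiableAt hsin)
    (by rw [hφ' z hz, mul_div_cancel₀ _ hcos2aψz]) hcosψz

/-- If `φ` is analytic near `0` with `φ 0 = 0` and `φ' = cos ψ / cos (2aψ)`, where `ψ` is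
analytic near `0` with `ψ 0 = 0` and `sin ψ = κ sin φ`, then `d = cos ψ` satisfies
`cos²(2aψ) (d')² = (1 - d²)(d² - λ²)` where `λ² = 1 - κ²`. -/
theorem d_diff_eq (κ lam : ℝ) (hκ : κ ∈ Set.Ioo (0 : ℝ) 1) (hlam : lam ^ 2 = 1 - κ ^ 2)
    (a : ℂ) (U : Set ℂ) (hU : IsOpen U) (hUc : IsPreconnected U) (h0 : (0 : ℂ) ∈ U)
    (φ ψ : ℂ → ℂ) (hφ : ∀ z ∈ U, AnalyticAt ℂ φ z) (hψ : ∀ z ∈ U, AnalyticAt ℂ ψ z)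
    (hφ0 : φ 0 = 0) (hψ0 : ψ 0 = 0)
    (hφ' : ∀ z ∈ U, deriv φ z = Complex.cos (ψ z) / Complex.cos (2 * a * ψ z))
    (hsin : ∀ z ∈ U, Complex.sin (ψ z) = (κ : ℂ) * Complex.sin (φ z)) :
    ∀ z ∈ U, Complex.cos (2 * a * ψ z) ^ 2 *
        (deriv (fun w => Complex.cos (ψ w)) z) ^ 2 =
      (1 - Complex.cos (ψ z) ^ 2) * (Complex.cos (ψ z) ^ 2 - (lam : ℂ) ^ 2) :=
  d_diff_eq_general κ lam hlam a U hU hUc h0 φ ψ hφ hψ hψ0 hφ' hsin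
end

section
/- Let n be a positive integer, λ ∈ (0,1), and let f be a holomorphic function on a connected open set satisfying f²·(f')² = (1/n²)(1 - f²)(Tₙ(f)² - λ²). Then f has no zeros. -/
open Complex Polynomial.Chebyshev

lemma cheb_eval_zero_sq : ∀ k : ℕ, ((T ℂ k).eval 0) ^ 2 = 0 ∨ ((T ℂ k).eval 0) ^ 2 = 1
  | 0 => Or.inr (by simp)
  | 1 => Or.inl (by simp)
  | (k + 2) => by
    have h : ((k : ℤ) + 2) = ((k + 2 : ℕ) : ℤ) := by push_cast; ring
    have h2 := T_add_two ℂ (k : ℤ)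
    rw [h] at h2
    have : (T ℂ (k + 2 : ℕ)).eval 0 = -(T ℂ k).eval 0 := by
      rw [h2]; simp
    rw [this, neg_pow]
    simpa using cheb_eval_zero_sq k

/-- Each holomorphic solution on a domain of
`f² (f')² = (1/n²)(1 - f²)(Tₙ(f)² - λ²)` (with `0 < λ < 1`) is zero-free. -/
theorem solution_zero_free (n : ℕ) (hn : 0 < n) (lam : ℝ) (hlam : lam ∈ Set.Ioo (0 : ℝ) 1)
    (U : Set ℂ) (hU : IsOpen U) (hUc : IsPreconnected U)
    (f : ℂ → ℂ) (hf : DifferentiableOn ℂ f U)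
    (hde : ∀ z ∈ U, f z ^ 2 * (deriv f z) ^ 2 =
      (1 / (n : ℂ) ^ 2) * (1 - f z ^ 2) * (((T ℂ n).eval (f z)) ^ 2 - (lam : ℂ) ^ 2)) :
    ∀ z ∈ U, f z ≠ 0 := by
  intro z hz hzero
  have h := hde z hz
  rw [hzero] at h
  simp only [zero_pow, ne_eq, OfNat.ofNat_ne_zero, not_false_eq_true, zero_mul] at h
  have hn' : ((n : ℂ) ^ 2) ≠ 0 :=
    pow_ne_zero _ (Nat.cast_ne_zero.mpr hn.ne')
  have key : ((T ℂ n).eval 0) ^ 2 = (lam : ℂ) ^ 2 := by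
    have h' : (1 / (n : ℂ) ^ 2) * (1 - 0) * (((T ℂ n).eval 0) ^ 2 - (lam : ℂ) ^ 2) = 0 :=
      h.symm
    have := mul_eq_zero.mp h'
    rcases this with h2 | h2
    · exfalso
      rcases mul_eq_zero.mp h2 with h3 | h3
      · exact (one_div_ne_zero hn') h3
      · norm_num at h3
    · exact sub_eq_zero.mp h2
  rcases cheb_eval_zero_sq n with hc | hc
  · rw [hc] at key
    have : (lam : ℂ) = 0 := by
      have := key.symm
      exact pow_eq_zero_iff (n := 2) (by norm_num) |>.mp this
    have : lam = 0 := by exact_mod_cast this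
    linarith [hlam.1]
  · rw [hc] at key
    have : (lam : ℝ) ^ 2 = 1 := by exact_mod_cast key.symm
    nlinarith [hlam.1, hlam.2]
end

section
/- Let n > 3 be an integer and λ ∈ (0,1). If f is a meromorphic (elliptic) function on ℂ with a pole of order m ≥ 1 at some point and f satisfies (f')² = (4/n²)(1 - f)(Sₙ(f) - λ²) where Sₙ has degree n, then a contradiction follows; i.e., any elliptic solution of this equation is constant. -/
open Complex Polynomial Polynomial.Chebyshev

/-!
Near a pole of order `m`, `f'` has a pole of order `m + 1` and `P ∘ f` has a pole of order
`(deg P) m` for every nonzero polynomial `P`, because the leading term dominates. The right-hand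
side of the equation is `P ∘ f` with `deg P = n + 1`, so comparing orders gives
`2 (m + 1) = (n + 1) m`, i.e. `m (n - 1) = 2`, which is impossible for `n > 3`.
-/

open Filter Topology

section PoleOrder

variable {𝕜 𝕜' : Type*} [NontriviallyNormedField 𝕜] [NontriviallyNormedField 𝕜']
  [NormedAlgebra 𝕜 𝕜'] {f : 𝕜 → 𝕜'} {x : 𝕜}

theorem MeromorphicAt.polynomial_eval (hf : MeromorphicAt f x) (P : 𝕜'[X]) :
    MeromorphicAt (fun z ↦ P.eval (f z)) x := by
  induction P using Polynomial.induction_on' with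
  | add p q hp hq => simpa only [eval_add] using hp.fun_add hq
  | monomial k a =>
    simpa only [eval_monomial] using (MeromorphicAt.const a x).fun_mul (hf.fun_pow k)

theorem meromorphicOrderAt_polynomial_eval_of_neg {k : ℤ} (hf : meromorphicOrderAt f x = k)
    (hk : k < 0) {P : 𝕜'[X]} (hP : P ≠ 0) :
    meromorphicOrderAt (fun z ↦ P.eval (f z)) x = (P.natDegree * k : ℤ) := by
  have hfm : MeromorphicAt f x :=
    meromorphicAt_of_meromorphicOrderAt_ne_zero (by simp [hf, hk.ne])
  induction hd : P.natDegree using Nat.strong_induction_on generalizing P with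
  | _ d ih =>
  have hlead : meromorphicOrderAt ((fun _ ↦ P.leadingCoeff) * f ^ d) x = (d * k : ℤ) := by
    classical
    rw [meromorphicOrderAt_mul (.const _ x) (hfm.pow d), meromorphicOrderAt_const,
      if_neg (leadingCoeff_ne_zero.mpr hP), meromorphicOrderAt_pow hfm, hf]
    simp only [zero_add, WithTop.coe_mul, WithTop.coe_natCast]
  have htail : (d * k : ℤ) < meromorphicOrderAt (fun z ↦ P.eraseLead.eval (f z)) x := by
    by_cases h0 : P.eraseLead = 0
    · simp only [h0, eval_zero]
      rw [meromorphicOrderAt_eq_top_iff.mpr (by simp)]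
      exact WithTop.coe_lt_top _
    have hlt := P.eraseLead_natDegree_lt_or_eraseLead_eq_zero.resolve_right h0
    rw [ih _ (hd ▸ hlt) h0 rfl]
    exact_mod_cast Int.mul_lt_mul_of_neg_right (by omega) hk
  have hsplit : (fun z ↦ P.eval (f z)) =
      (fun _ ↦ P.leadingCoeff) * f ^ d + fun z ↦ P.eraseLead.eval (f z) := by
    ext z
    conv_lhs => rw [← P.eraseLead_add_C_mul_X_pow]
    simp [hd, add_comm]
  rw [hsplit, meromorphicOrderAt_add_eq_left_of_lt (hfm.polynomial_eval _) (hlead ▸ htail), hlead]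

theorem natDegree_mul_eq_of_deriv_sq_eq_polynomial_eval [CompleteSpace 𝕜'] [CharZero 𝕜]
    {m : ℕ} (hm : m ≠ 0) (hf : meromorphicOrderAt f x = ((-m : ℤ) : WithTop ℤ))
    {P : 𝕜'[X]} (hP : P ≠ 0)
    (hde : deriv f ^ 2 =ᶠ[𝓝[≠] x] fun z ↦ P.eval (f z)) :
    P.natDegree * m = 2 * (m + 1) := by
  have hfm : MeromorphicAt f x :=
    meromorphicAt_of_meromorphicOrderAt_ne_zero (by simp [hf, hm])
  have hderiv : meromorphicOrderAt (deriv f) x = (-(m : ℤ) - 1 : ℤ) :=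
    meromorphicOrderAt_deriv_eq_sub_one (by simpa using hm) hf
  have hsq : meromorphicOrderAt (deriv f ^ 2) x = (2 * (-(m : ℤ) - 1) : ℤ) := by
    rw [meromorphicOrderAt_pow hfm.deriv, hderiv]
    norm_cast
  rw [meromorphicOrderAt_congr hde,
    meromorphicOrderAt_polynomial_eval_of_neg hf (by omega) hP] at hsq
  have : (P.natDegree : ℤ) * m = 2 * (m + 1) := by linarith [WithTop.coe_injective hsq]
  exact_mod_cast this

end PoleOrder

theorem no_elliptic_solution_general (n : ℕ) (hn : 3 < n) (lam : ℝ)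
    (S : Polynomial ℂ) (hSdeg : S.natDegree = n)
    (f : ℂ → ℂ) (hf : ∀ z : ℂ, MeromorphicAt f z)
    (z₀ : ℂ) (m : ℕ) (hm : 1 ≤ m) (hpole : meromorphicOrderAt f z₀ = ((-(m : ℤ) : ℤ) : WithTop ℤ))
    (hde : ∀ z : ℂ, AnalyticAt ℂ f z → (deriv f z) ^ 2 =
      (4 / (n : ℂ) ^ 2) * (1 - f z) * (S.eval (f z) - (lam : ℂ) ^ 2)) :
    False := by
  set P : ℂ[X] := C (4 / (n : ℂ) ^ 2) * (1 - X) * (S - C ((lam : ℂ) ^ 2))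
  have hP : P.natDegree = n + 1 := by
    have hc : (4 / (n : ℂ) ^ 2) ≠ 0 :=
      div_ne_zero (by norm_num) (pow_ne_zero _ (Nat.cast_ne_zero.mpr (by omega)))
    have hlin : (C (4 / (n : ℂ) ^ 2) * (1 - X)).natDegree = 1 := by
      rw [natDegree_C_mul hc]; compute_degree!
    have hS : (S - C ((lam : ℂ) ^ 2)).natDegree = n := by rw [natDegree_sub_C, hSdeg]
    rw [natDegree_mul (ne_zero_of_natDegree_gt (n := 0) (by omega))
      (ne_zero_of_natDegree_gt (n := 0) (by omega)), hlin, hS, add_comm]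
  have hde' : deriv f ^ 2 =ᶠ[𝓝[≠] z₀] fun z ↦ P.eval (f z) := by
    filter_upwards [(hf z₀).eventually_analyticAt] with z hz
    simp [P, hde z hz]
  have horder := natDegree_mul_eq_of_deriv_sq_eq_polynomial_eval (by omega) hpole
    (ne_zero_of_natDegree_gt (n := 0) (by omega)) hde'
  rw [hP] at horder
  nlinarith

/-- Let `n > 3`, `0 < λ < 1`, and let `Sₙ` be the degree-`n` polynomial with
`Tₙ(x)² = Sₙ(x²)`. If `f` is an elliptic function (meromorphic on `ℂ` and doubly
periodic) possessing a pole of some order `m ≥ 1`, and `f` satisfies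
`(f')² = (4/n²)(1 - f)(Sₙ(f) - λ²)` at all points where it is analytic,
then we reach a contradiction: any elliptic solution is constant. -/
theorem no_elliptic_solution (n : ℕ) (hn : 3 < n) (lam : ℝ) (hlam : lam ∈ Set.Ioo (0 : ℝ) 1)
    (S : Polynomial ℂ) (hSdeg : S.natDegree = n)
    (hS : ∀ x : ℂ, ((T ℂ n).eval x) ^ 2 = S.eval (x ^ 2))
    (f : ℂ → ℂ) (hf : ∀ z : ℂ, MeromorphicAt f z)
    (ω₁ ω₂ : ℂ) (hω : LinearIndependent ℝ ![ω₁, ω₂])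
    (hper₁ : ∀ z : ℂ, f (z + ω₁) = f z) (hper₂ : ∀ z : ℂ, f (z + ω₂) = f z)
    (z₀ : ℂ) (m : ℕ) (hm : 1 ≤ m) (hpole : meromorphicOrderAt f z₀ = ((-(m : ℤ) : ℤ) : WithTop ℤ))
    (hde : ∀ z : ℂ, AnalyticAt ℂ f z → (deriv f z) ^ 2 =
      (4 / (n : ℂ) ^ 2) * (1 - f z) * (S.eval (f z) - (lam : ℂ) ^ 2)) :
    False :=
  no_elliptic_solution_general n hn lam S hSdeg f hf z₀ m hm hpole hde
end

section
/- Let n = 2m+1 be odd, Λ = 1 - 2λ², and suppose ∂ satisfies ∂²(∂')² = (2/n²)(1 - ∂²)(Tₙ(∂) + Λ). Then ∇ = ∂² satisfies [(n²/8)(∇')² + Λ(∇ - 1)]² = ∇(∇ - 1)²·Vₘ(2∇ - 1)². -/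
/-! Since `T₂ = 2X² - 1`, the odd Chebyshev polynomials satisfy `T₂ₘ₊₅ = 2 T₂ T₂ₘ₊₃ - T₂ₘ₊₁`,
which is the recurrence of `X · Vₘ(T₂)`. Hence `Tₙ(∂) = ∂ Vₘ(2∂² - 1)`. On the other hand
`∇' = 2∂∂'`, so the hypothesis says `(n²/8)(∇')² = (1 - ∂²)(Tₙ(∂) + Λ)`; adding `Λ(∇ - 1)`
leaves `(1 - ∂²) Tₙ(∂)`, whose square is `∇(∇ - 1)² Vₘ(2∇ - 1)²`. -/

open Complex Polynomial Polynomial.Chebyshev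

/-- The Chebyshev polynomial of the third kind `Vₘ`, defined by the recurrence
`V₀ = 1`, `V₁ = 2X - 1`, `Vₘ₊₂ = 2X Vₘ₊₁ - Vₘ`. -/
noncomputable def chebV : ℕ → Polynomial ℂ
  | 0 => 1
  | 1 => 2 * Polynomial.X - 1
  | (m + 2) => 2 * Polynomial.X * chebV (m + 1) - chebV m

theorem T_two_mul_add_one_eq_X_mul_chebV_comp :
    ∀ m : ℕ, T ℂ (2 * m + 1) = X * (chebV m).comp (2 * X ^ 2 - 1)
  | 0 => by simp [chebV]
  | 1 => by
      rw [show (2 * ((1 : ℕ) : ℤ) + 1) = 1 + 2 by norm_num, T_add_two, one_add_one_eq_two, T_two,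
        T_one]
      simp only [chebV, sub_comp, mul_comp, ofNat_comp, X_comp, one_comp]
      ring
  | m + 2 => by
      have hrec := T_mul_T ℂ (2 * m + 3) 2
      rw [show (2 * (m : ℤ) + 3 - 2) = 2 * m + 1 by ring,
        T_two_mul_add_one_eq_X_mul_chebV_comp m, T_two] at hrec
      have hprev := T_two_mul_add_one_eq_X_mul_chebV_comp (m + 1)
      push_cast at hprev ⊢
      rw [show 2 * ((m : ℤ) + 1) + 1 = 2 * m + 3 by ring] at hprev
      rw [show 2 * ((m : ℤ) + 2) + 1 = 2 * m + 3 + 2 by ring, chebV]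
      simp only [sub_comp, mul_comp, ofNat_comp, X_comp]
      linear_combination -hrec + (4 * X ^ 2 - 2) * hprev

theorem sq_add_mul_sub_one_eq_of_sq_mul_sq_eq {K : Type*} [Field K] [CharZero K] {n P d Λ t : K}
    (hn : n ≠ 0) (h : P ^ 2 * d ^ 2 = 2 / n ^ 2 * (1 - P ^ 2) * (t + Λ)) :
    (n ^ 2 / 8 * (2 * P * d) ^ 2 + Λ * (P ^ 2 - 1)) ^ 2 = (P ^ 2 - 1) ^ 2 * t ^ 2 := by
  have hscaled : n ^ 2 / 8 * (2 * P * d) ^ 2 = (1 - P ^ 2) * (t + Λ) := by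
    rw [show n ^ 2 / 8 * (2 * P * d) ^ 2 = n ^ 2 / 2 * (P ^ 2 * d ^ 2) by ring, h]
    field_simp
  rw [hscaled]
  ring

theorem nabla_diff_eq_odd_general (m : ℕ) (lam : ℝ)
    (U : Set ℂ) (hU : IsOpen U)
    (p : ℂ → ℂ) (hp : DifferentiableOn ℂ p U)
    (hde : ∀ z ∈ U, p z ^ 2 * (deriv p z) ^ 2 =
      (2 / ((2 * m + 1 : ℕ) : ℂ) ^ 2) * (1 - p z ^ 2) *
        ((T ℂ (2 * m + 1)).eval (p z) + (1 - 2 * (lam : ℂ) ^ 2))) :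
    ∀ z ∈ U,
      ((((2 * m + 1 : ℕ) : ℂ) ^ 2 / 8) * (deriv (fun w => p w ^ 2) z) ^ 2 +
          (1 - 2 * (lam : ℂ) ^ 2) * (p z ^ 2 - 1)) ^ 2 =
        p z ^ 2 * (p z ^ 2 - 1) ^ 2 * ((chebV m).eval (2 * p z ^ 2 - 1)) ^ 2 := by
  intro z hz
  have hderiv : deriv (fun w => p w ^ 2) z = 2 * p z * deriv p z := by
    simpa using deriv_fun_pow (hp.differentiableAt (hU.mem_nhds hz)) 2
  have hn : ((2 * m + 1 : ℕ) : ℂ) ≠ 0 := Nat.cast_ne_zero.mpr (2 * m).succ_ne_zero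
  rw [hderiv, sq_add_mul_sub_one_eq_of_sq_mul_sq_eq hn (hde z hz),
    T_two_mul_add_one_eq_X_mul_chebV_comp]
  simp only [eval_mul, eval_X, eval_comp, eval_sub, eval_pow, eval_ofNat, eval_one]
  ring

/-- For `n = 2m + 1` and `Λ = 1 - 2λ²`, if `∂` satisfies
`∂²(∂')² = (2/n²)(1 - ∂²)(Tₙ(∂) + Λ)`, then `∇ = ∂²` satisfies
`[(n²/8)(∇')² + Λ(∇ - 1)]² = ∇(∇ - 1)² Vₘ(2∇ - 1)²`. -/
theorem nabla_diff_eq_odd (m : ℕ) (lam : ℝ) (hlam : lam ∈ Set.Ioo (0 : ℝ) 1)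
    (U : Set ℂ) (hU : IsOpen U)
    (p : ℂ → ℂ) (hp : DifferentiableOn ℂ p U)
    (hde : ∀ z ∈ U, p z ^ 2 * (deriv p z) ^ 2 =
      (2 / ((2 * m + 1 : ℕ) : ℂ) ^ 2) * (1 - p z ^ 2) *
        ((T ℂ (2 * m + 1)).eval (p z) + (1 - 2 * (lam : ℂ) ^ 2))) :
    ∀ z ∈ U,
      ((((2 * m + 1 : ℕ) : ℂ) ^ 2 / 8) * (deriv (fun w => p w ^ 2) z) ^ 2 +
          (1 - 2 * (lam : ℂ) ^ 2) * (p z ^ 2 - 1)) ^ 2 =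
        p z ^ 2 * (p z ^ 2 - 1) ^ 2 * ((chebV m).eval (2 * p z ^ 2 - 1)) ^ 2 :=
  nabla_diff_eq_odd_general m lam U hU p hp hde
end
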